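/- arXiv:2104.04539 — 2 statements merged into one kernel-verified Lean document; each statement's English description precedes it below -/
import Mathlib

section
/- Let f_1, ..., f_k be functions with the shift f^[m](u) = f(u + i m/2) and let W denote the discrete Wronskian W(F_1,...,F_n) = det( F_b^[n+1−2a] )_{a,b=1..n}. Then the general Desnanot–Jacobi identity holds: W(f_1,...,f_k) · W(f_1,...,f_{k−2}) = W( W(f_1,...,f_{k−1}), W(f_1,...,f_{k−2},f_k) ), where the outer W on the right-hand side is the 2×2 discrete Wronskian W(F,G) = F^[1]G^[−1] − F^[−1]G^[1]. -/
open Matrix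

set_option linter.unusedSectionVars false

section Core
variable {R : Type*} [CommRing R] {m : ℕ}

lemma updCol_comm {n' : Type*} [DecidableEq n'] (A : Matrix n' n' R) {p q : n'}
    (hpq : p ≠ q) (uu vv : n' → R) :
    (A.updateCol p uu).updateCol q vv = (A.updateCol q vv).updateCol p uu := by
  ext i j
  simp only [updateCol_apply]
  rcases eq_or_ne j q with rfl | hq <;> rcases eq_or_ne j p with rfl | hp <;> simp_all

lemma det_updCol_finsum {n' ι : Type*} [DecidableEq n'] [Fintype n'] [DecidableEq ι]
    (A : Matrix n' n' R) (j : n') (s : Finset ι) (g : ι → n' → R) :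
    (A.updateCol j (∑ i ∈ s, g i)).det = ∑ i ∈ s, (A.updateCol j (g i)).det := by
  induction s using Finset.induction_on with
  | empty =>
      rw [Finset.sum_empty, Finset.sum_empty,
        show (0 : n' → R) = (0 : R) • (0 : n' → R) from (zero_smul R 0).symm,
        det_updateCol_smul, zero_mul]
  | @insert a s ha ih =>
      rw [Finset.sum_insert ha, det_updateCol_add, ih, Finset.sum_insert ha]

lemma expand2 (A : Matrix (Fin m) (Fin m) R) (p q : Fin m) (hpq : p ≠ q) (c c' : Fin m → R) :
    ((A.updateCol p (A *ᵥ c)).updateCol q (A *ᵥ c')).det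
      = c p * c' q * A.det - c q * c' p * A.det := by
  have hv : ∀ v : Fin m → R, A *ᵥ v = ∑ j, v j • (fun k => A k j) := by
    intro v; ext k
    simp [Matrix.mulVec, dotProduct, mul_comm, Finset.sum_apply]
  have step1 : ((A.updateCol p (A *ᵥ c)).updateCol q (A *ᵥ c')).det
      = ∑ i, c' i * ∑ j, c j *
          (((A.updateCol q (fun k => A k i)).updateCol p (fun k => A k j)).det) := by
    rw [hv c', det_updCol_finsum]
    refine Finset.sum_congr rfl fun i _ => ?_
    rw [det_updateCol_smul]
    congr 1
    rw [updCol_comm _ hpq, hv c, det_updCol_finsum]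
    refine Finset.sum_congr rfl fun j _ => ?_
    rw [det_updateCol_smul]
  rw [step1]
  have inner_eval : ∀ i : Fin m, (∑ j, c j *
      (((A.updateCol q (fun k => A k i)).updateCol p (fun k => A k j)).det))
      = (if i = q then c p * A.det else if i = p then -(c q * A.det) else 0) := by
    intro i
    rcases eq_or_ne q i with rfl | hiq
    · rw [if_pos rfl, Finset.sum_eq_single p]
      · congr 1
        have h : (A.updateCol q (fun k => A k q)).updateCol p (fun k => A k p) = A := by
          ext a b
          simp only [updateCol_apply]
          rcases eq_or_ne b p with rfl | h1
          · simp
          · rcases eq_or_ne b q with rfl | h2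
            · simp [h1]
            · simp [h1, h2]
        rw [h]
      · intro j _ hj
        rcases eq_or_ne q j with rfl | hjq
        · rw [det_zero_of_column_eq hpq (fun kk => ?_), mul_zero]
          simp [updateCol_apply, hpq]
        · rw [det_zero_of_column_eq (Ne.symm hj) (fun kk => ?_), mul_zero]
          simp [updateCol_apply, hj, Ne.symm hjq, Ne.symm hj]
      · simp
    · rcases eq_or_ne p i with rfl | hip
      · rw [if_neg (Ne.symm hiq), if_pos rfl, Finset.sum_eq_single q]
        · have h : (A.updateCol q (fun k => A k p)).updateCol p (fun k => A k q)
              = A.submatrix id (Equiv.swap p q) := by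
            ext a b
            simp only [updateCol_apply, submatrix_apply, id_eq, Equiv.swap_apply_def]
            rcases eq_or_ne b p with rfl | h1
            · simp
            · rcases eq_or_ne b q with rfl | h2
              · simp [h1]
              · simp [h1, h2]
          rw [h, det_permute', Equiv.Perm.sign_swap hpq]
          push_cast
          ring
        · intro j _ hj
          rcases eq_or_ne p j with rfl | hjp
          · rw [det_zero_of_column_eq hpq (fun kk => ?_), mul_zero]
            simp [updateCol_apply, hpq, Ne.symm hpq]
          · rw [det_zero_of_column_eq (Ne.symm hjp) (fun kk => ?_), mul_zero]
            simp [updateCol_apply, hjp, hj, Ne.symm hjp, Ne.symm hj]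
        · simp
      · rw [if_neg (Ne.symm hiq), if_neg (Ne.symm hip), Finset.sum_eq_zero]
        intro j _
        rw [det_zero_of_column_eq hiq (fun kk => ?_), mul_zero]
        simp [updateCol_apply, Ne.symm hiq, Ne.symm hip, hpq, Ne.symm hpq]
  calc ∑ i, c' i * ∑ j, c j *
          (((A.updateCol q (fun k => A k i)).updateCol p (fun k => A k j)).det)
      = ∑ i : Fin m, ((if i = q then c' i * (c p * A.det) else 0)
          + (if i = p then c' i * (-(c q * A.det)) else 0)) := by
        refine Finset.sum_congr rfl fun i _ => ?_
        rw [inner_eval i]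
        rcases eq_or_ne i q with rfl | h1
        · simp [Ne.symm hpq]
        · rcases eq_or_ne i p with rfl | h2
          · simp [h1]
          · simp [h1, h2]
    _ = c p * c' q * A.det - c q * c' p * A.det := by
        rw [Finset.sum_add_distrib, Finset.sum_ite_eq' Finset.univ q,
          Finset.sum_ite_eq' Finset.univ p]
        simp only [Finset.mem_univ, if_pos]
        ring

lemma dj_core (A : Matrix (Fin m) (Fin m) R) (r s p q : Fin m) (hpq : p ≠ q) :
    A.det * ((A.updateCol p (Pi.single r 1)).det * (A.updateCol q (Pi.single s 1)).det
      - (A.updateCol q (Pi.single r 1)).det * (A.updateCol p (Pi.single s 1)).det)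
    = A.det ^ 2 * ((A.updateCol p (Pi.single r 1)).updateCol q (Pi.single s 1)).det := by
  have h1 := mulVec_cramer A (Pi.single r (1:R))
  have h2 := mulVec_cramer A (Pi.single s (1:R))
  have way2 := expand2 A p q hpq (cramer A (Pi.single r 1)) (cramer A (Pi.single s 1))
  rw [h1, h2] at way2
  have way1 : ((A.updateCol p (A.det • (Pi.single r 1 : Fin m → R))).updateCol q
        (A.det • (Pi.single s 1 : Fin m → R))).det
      = A.det ^ 2 * ((A.updateCol p (Pi.single r 1)).updateCol q (Pi.single s 1)).det := by
    rw [det_updateCol_smul, updCol_comm A hpq, det_updateCol_smul, ← updCol_comm A hpq]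
    ring
  rw [way1] at way2
  simp only [cramer_apply] at way2
  linear_combination -way2


lemma dj_complex (A : Matrix (Fin m) (Fin m) ℂ) (r s p q : Fin m) (hpq : p ≠ q) :
    (A.updateCol p (Pi.single r 1)).det * (A.updateCol q (Pi.single s 1)).det
      - (A.updateCol q (Pi.single r 1)).det * (A.updateCol p (Pi.single s 1)).det
    = A.det * ((A.updateCol p (Pi.single r 1)).updateCol q (Pi.single s 1)).det := by
  set A' : Matrix (Fin m) (Fin m) (Polynomial ℂ) := Matrix.charmatrix (-A) with hA'
  have hd : A'.det ≠ 0 := by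
    have : A'.det = (-A).charpoly := rfl
    rw [this]
    exact (Matrix.charpoly_monic (-A)).ne_zero
  have key := dj_core A' r s p q hpq
  rw [sq, mul_assoc] at key
  have key2 := mul_left_cancel₀ hd key
  have φ := Polynomial.evalRingHom (0:ℂ)
  have hmap : A'.map (Polynomial.evalRingHom (0:ℂ)) = A := by
    ext i j
    rcases eq_or_ne i j with rfl | h
    · simp [hA', Matrix.charmatrix_apply_eq]
    · simp [hA', Matrix.charmatrix_apply_ne _ _ _ h]
  have hsingle : ∀ t : Fin m, (Polynomial.evalRingHom (0:ℂ)) ∘ (Pi.single t (1:Polynomial ℂ))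
      = Pi.single t (1:ℂ) := by
    intro t; funext i
    simp only [Function.comp_apply, Pi.single_apply]
    split_ifs <;> simp
  have := congrArg (Polynomial.evalRingHom (0:ℂ)) key2
  simpa only [_root_.map_sub, _root_.map_mul, RingHom.map_det, RingHom.mapMatrix_apply,
    Matrix.map_updateCol, hmap, hsingle] using this

lemma det_updateColumn_single (M : Matrix (Fin (m+1)) (Fin (m+1)) R) (r j : Fin (m+1)) :
    (M.updateCol j (Pi.single r 1)).det
      = (-1 : R) ^ ((r:ℕ) + (j:ℕ)) * (M.submatrix r.succAbove j.succAbove).det := by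
  rw [det_succ_column _ j, Finset.sum_eq_single r]
  · have h1 : (M.updateCol j (Pi.single r 1)) r j = 1 := by simp
    have h2 : (M.updateCol j (Pi.single r 1)).submatrix r.succAbove j.succAbove
        = M.submatrix r.succAbove j.succAbove := by
      ext a b
      simp [updateCol_apply, Fin.succAbove_ne j b]
    rw [h1, h2, mul_one]
  · intro i _ hir
    have : (M.updateCol j (Pi.single r 1)) i j = 0 := by
      simp [Pi.single_apply, hir]
    rw [this]
    ring
  · simp
end Core



/-- The shift `F^[m](u) = F(u + i m / 2)`. -/
noncomputable def sh (m : ℤ) (f : ℂ → ℂ) : ℂ → ℂ := fun u => f (u + Complex.I * (m : ℂ) / 2)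

/-- The 2×2 discrete Wronskian `W(F,G) = F^[1] G^[-1] - F^[-1] G^[1]`. -/
noncomputable def W2 (f g : ℂ → ℂ) : ℂ → ℂ :=
  fun u => sh 1 f u * sh (-1) g u - sh (-1) f u * sh 1 g u

/-- The n×n discrete Wronskian of the first `n` members of a family `F : ℕ → ℂ → ℂ`:
`W(F_0,…,F_{n-1}) = det(F_b^[n+1-2a])` with 1-based rows `a = 1,…,n`. -/
noncomputable def WrN (n : ℕ) (F : ℕ → ℂ → ℂ) : ℂ → ℂ := fun u =>
  Matrix.det (Matrix.of fun a b : Fin n =>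
    F b (u + Complex.I * ((n : ℂ) - 1 - 2 * ((a : ℕ) : ℂ)) / 2))

/-- General Desnanot–Jacobi identity for discrete Wronskians:
`W(f_1,…,f_k) · W(f_1,…,f_{k-2}) = W( W(f_1,…,f_{k-1}), W(f_1,…,f_{k-2},f_k) )`. -/
theorem stmt1 (k : ℕ) (hk : 2 ≤ k) (f : ℕ → ℂ → ℂ) (u : ℂ) :
    WrN k f u * WrN (k - 2) f u
      = W2 (WrN (k - 1) f)
          (WrN (k - 1) (fun j => if j = k - 2 then f (k - 1) else f j)) u := by
  obtain ⟨n, rfl⟩ : ∃ n, k = n + 2 := ⟨k - 2, by omega⟩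
  clear hk
  simp only [show n + 2 - 1 = n + 1 by omega, show n + 2 - 2 = n by omega]
  set g : ℕ → ℂ → ℂ := fun j => if j = n then f (n + 1) else f j with hg
  set M : Matrix (Fin (n+2)) (Fin (n+2)) ℂ :=
    Matrix.of (fun a b : Fin (n+2) =>
      f b (u + Complex.I * (((n+2:ℕ) : ℂ) - 1 - 2 * ((a:ℕ) : ℂ)) / 2)) with hM
  set p : Fin (n+2) := ⟨n, by omega⟩ with hp
  set q : Fin (n+2) := Fin.last (n+1) with hq
  have hpq : p ≠ q := by
    simp only [hp, hq, Ne, Fin.ext_iff, Fin.val_last]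
    omega
  have hdet : WrN (n+2) f u = M.det := rfl
  -- value of succAbove at p
  have hsp : ∀ b : Fin (n+1), ((p.succAbove b : Fin (n+2)) : ℕ)
      = if (b:ℕ) = n then n+1 else (b:ℕ) := by
    intro b
    rcases eq_or_ne (b:ℕ) n with h | h
    · rw [if_pos h, Fin.succAbove_of_le_castSucc]
      · simp [h]
      · rw [Fin.le_def]
        simp [hp, h]
    · rw [if_neg h, Fin.succAbove_of_castSucc_lt]
      · simp
      · rw [Fin.lt_def]
        simp only [Fin.coe_castSucc, hp]
        omega
  have hfg : ∀ b : Fin (n+1), f ((p.succAbove b : Fin (n+2)) : ℕ) = g (b:ℕ) := by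
    intro b
    rw [hsp b, hg]
    rcases eq_or_ne (b:ℕ) n with h | h
    · simp [h]
    · simp [h]
  -- identification of the four minors
  have hG1 : (M.submatrix (Fin.last (n+1)).succAbove (Fin.last (n+1)).succAbove).det
      = sh 1 (WrN (n+1) f) u := by
    simp only [sh, WrN]
    congr 1
    ext a b
    simp only [Matrix.submatrix_apply, Matrix.of_apply, Fin.succAbove_last, Fin.coe_castSucc, hM]
    congr 1
    push_cast
    ring
  have hGm1 : (M.submatrix (0 : Fin (n+2)).succAbove (Fin.last (n+1)).succAbove).det
      = sh (-1) (WrN (n+1) f) u := by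
    simp only [sh, WrN]
    congr 1
    ext a b
    simp only [Matrix.submatrix_apply, Matrix.of_apply, Fin.succAbove_last, Fin.zero_succAbove,
      Fin.coe_castSucc, Fin.val_succ, hM]
    congr 1
    push_cast
    ring
  have hH1 : (M.submatrix (Fin.last (n+1)).succAbove p.succAbove).det
      = sh 1 (WrN (n+1) g) u := by
    simp only [sh, WrN]
    congr 1
    ext a b
    simp only [Matrix.submatrix_apply, Matrix.of_apply, Fin.succAbove_last, Fin.coe_castSucc, hM]
    rw [hfg b]
    congr 1
    push_cast
    ring
  have hHm1 : (M.submatrix (0 : Fin (n+2)).succAbove p.succAbove).det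
      = sh (-1) (WrN (n+1) g) u := by
    simp only [sh, WrN]
    congr 1
    ext a b
    simp only [Matrix.submatrix_apply, Matrix.of_apply, Fin.zero_succAbove, Fin.val_succ, hM]
    rw [hfg b]
    congr 1
    push_cast
    ring
  -- the doubly-updated determinant
  have hInner : ((M.updateCol p (Pi.single 0 1)).updateCol q
        (Pi.single (Fin.last (n+1)) 1)).det = (-1:ℂ)^n * WrN n f u := by
    rw [det_updateColumn_single]
    have hsub : (M.updateCol p (Pi.single 0 1)).submatrix
          (Fin.last (n+1)).succAbove (Fin.last (n+1)).succAbove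
        = (M.submatrix Fin.castSucc Fin.castSucc).updateCol (Fin.last n) (Pi.single 0 1) := by
      ext a b
      simp only [Matrix.submatrix_apply, Fin.succAbove_last, Matrix.updateCol_apply,
        Pi.single_apply]
      have h1 : (Fin.castSucc b = p) ↔ (b = Fin.last n) := by
        rw [Fin.ext_iff, Fin.ext_iff]
        simp [hp]
      have h2 : (Fin.castSucc a = (0 : Fin (n+2))) ↔ (a = 0) := by
        rw [Fin.ext_iff, Fin.ext_iff]
        simp
      simp only [h1, h2]
    rw [hsub, det_updateColumn_single, Matrix.submatrix_submatrix]
    have hinner2 : ((M.submatrix (Fin.castSucc ∘ (0 : Fin (n+1)).succAbove)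
          (Fin.castSucc ∘ (Fin.last n).succAbove))).det = WrN n f u := by
      simp only [WrN]
      congr 1
      ext a b
      simp only [Matrix.submatrix_apply, Matrix.of_apply, Function.comp_apply,
        Fin.zero_succAbove, Fin.succAbove_last, Fin.coe_castSucc, Fin.val_succ, hM]
      congr 1
      push_cast
      ring
    rw [hinner2]
    simp only [hq, Fin.val_last, Fin.val_zero, Fin.val_mk, zero_add]
    have e1 : (-1:ℂ)^((n+1) + (n+1)) = 1 := Even.neg_one_pow ⟨n+1, rfl⟩
    rw [e1, one_mul]
  -- the four cofactor identities
  have hE1 : (M.updateCol p (Pi.single 0 1)).det = (-1:ℂ)^n * sh (-1) (WrN (n+1) g) u := by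
    rw [det_updateColumn_single, hHm1]
    norm_num [hp]
  have hE2 : (M.updateCol q (Pi.single (Fin.last (n+1)) 1)).det = sh 1 (WrN (n+1) f) u := by
    rw [det_updateColumn_single]
    have : ((Fin.last (n+1) : Fin (n+2)) : ℕ) + ((q : Fin (n+2)) : ℕ) = (n+1) + (n+1) := by
      simp [hq]
    rw [this, hq, hG1, Even.neg_one_pow ⟨n+1, rfl⟩, one_mul]
  have hE3 : (M.updateCol q (Pi.single 0 1)).det
      = (-1:ℂ)^(n+1) * sh (-1) (WrN (n+1) f) u := by
    rw [det_updateColumn_single]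
    have : ((0 : Fin (n+2)) : ℕ) + ((q : Fin (n+2)) : ℕ) = n+1 := by simp [hq]
    rw [this, hq, hGm1]
  have hE4 : (M.updateCol p (Pi.single (Fin.last (n+1)) 1)).det
      = -(sh 1 (WrN (n+1) g) u) := by
    rw [det_updateColumn_single, hH1]
    have : ((Fin.last (n+1) : Fin (n+2)) : ℕ) + ((p : Fin (n+2)) : ℕ) = 2*n + 1 := by
      simp [hp]; omega
    rw [this, Odd.neg_one_pow ⟨n, rfl⟩]
    ring
  have key := dj_complex M 0 (Fin.last (n+1)) p q hpq
  rw [hE1, hE2, hE3, hE4, hInner] at key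
  rw [hdet, W2]
  rcases Nat.even_or_odd n with h | h
  · rw [h.neg_one_pow, (Even.add_one h).neg_one_pow] at key
    linear_combination -key
  · rw [h.neg_one_pow, (Odd.add_one h).neg_one_pow] at key
    linear_combination key
end

section
/- Let V be a module over a ℚ-algebra, ω ∈ Λ²(V) a degree-2 element, and v ∈ V a vector. Define Ψ_{(2j)} = ω^j/j! and Ψ_{(2j+1)} = v ∧ ω^j/j!. Then for every odd m = 2N+1 with N ≥ 1: Σ_{k odd, 1 ≤ k ≤ m} (−1)^{k(k−1)/2} Ψ_{(m−k)} ∧ Ψ_{(k)} = 0. (The sign satisfies (−1)^{k(k−1)/2} = (−1)^j for k = 2j+1, and each term equals (−1)^j v ∧ ω^N · binom(N,j)/N! up to normalization, so the sum vanishes by the alternating binomial identity.) -/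
open ExteriorAlgebra in
lemma stmt8_comm {R V : Type*} [CommRing R] [AddCommGroup V] [Module R V]
    (ω : ExteriorAlgebra R V) (v : V)
    (hω : ω ∈ (LinearMap.range (ExteriorAlgebra.ι R : V →ₗ[R] ExteriorAlgebra R V)) ^ 2) :
    Commute ω (ExteriorAlgebra.ι R v) := by
  rw [pow_two] at hω
  refine Submodule.mul_induction_on hω ?_ ?_
  · rintro a ⟨x, rfl⟩ b ⟨y, rfl⟩
    unfold Commute SemiconjBy
    have hx : ι R v * ι R x = -(ι R x * ι R v) :=
      eq_neg_of_add_eq_zero_left (ι_add_mul_swap v x)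
    have hy : ι R v * ι R y = -(ι R y * ι R v) :=
      eq_neg_of_add_eq_zero_left (ι_add_mul_swap v y)
    symm
    calc ι R v * (ι R x * ι R y) = (ι R v * ι R x) * ι R y := (mul_assoc _ _ _).symm
      _ = -(ι R x * ι R v) * ι R y := by rw [hx]
      _ = -(ι R x * (ι R v * ι R y)) := by rw [neg_mul, mul_assoc]
      _ = -(ι R x * -(ι R y * ι R v)) := by rw [hy]
      _ = ι R x * (ι R y * ι R v) := by rw [mul_neg, neg_neg]
      _ = ι R x * ι R y * ι R v := (mul_assoc _ _ _).symm
  · intro a b ha hb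
    exact ha.add_left hb

/-- Odd-rank quadratic pure spinor relation for the Cartan parameterisation
`Ψ_{(2j)} = ω^j/j!`, `Ψ_{(2j+1)} = v ∧ ω^j/j!`: for odd `m = 2N+1` with `N ≥ 1`,
`∑_{k odd, 1 ≤ k ≤ m} (−1)^{k(k−1)/2} Ψ_{(m−k)} ∧ Ψ_{(k)} = 0` (with `k = 2j+1`). -/
theorem stmt8 {R V : Type*} [CommRing R] [Algebra ℚ R] [AddCommGroup V] [Module R V]
    (ω : ExteriorAlgebra R V) (v : V)
    (hω : ω ∈ (LinearMap.range (ExteriorAlgebra.ι R : V →ₗ[R] ExteriorAlgebra R V)) ^ 2)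
    (N : ℕ) (hN : 1 ≤ N) :
    ∑ j ∈ Finset.range (N + 1),
        algebraMap ℚ R ((-1) ^ (((2 * j + 1) * (2 * j)) / 2)
            * (((N - j).factorial : ℚ))⁻¹ * ((j.factorial : ℚ))⁻¹)
          • (ω ^ (N - j) * (ExteriorAlgebra.ι R v * ω ^ j)) = 0 := by
  have hc := stmt8_comm ω v hω
  have hterm : ∀ j ∈ Finset.range (N + 1),
      algebraMap ℚ R ((-1) ^ (((2 * j + 1) * (2 * j)) / 2)
            * (((N - j).factorial : ℚ))⁻¹ * ((j.factorial : ℚ))⁻¹)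
          • (ω ^ (N - j) * (ExteriorAlgebra.ι R v * ω ^ j))
      = algebraMap ℚ R ((-1 : ℚ) ^ j * (((N - j).factorial : ℚ))⁻¹ * ((j.factorial : ℚ))⁻¹)
          • (ExteriorAlgebra.ι R v * ω ^ N) := by
    intro j hj
    rw [Finset.mem_range] at hj
    have hjN : j ≤ N := Nat.lt_succ_iff.mp hj
    have hmul : ω ^ (N - j) * (ExteriorAlgebra.ι R v * ω ^ j)
        = ExteriorAlgebra.ι R v * ω ^ N := by
      rw [← mul_assoc, (hc.pow_left (N - j)).eq, mul_assoc, ← pow_add,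
        Nat.sub_add_cancel hjN]
    have hsign : ((2 * j + 1) * (2 * j)) / 2 = (2 * j + 1) * j := by
      have : (2 * j + 1) * (2 * j) = 2 * ((2 * j + 1) * j) := by ring
      omega
    rw [hmul, hsign, pow_mul, Odd.neg_one_pow ⟨j, by ring⟩]
  rw [Finset.sum_congr rfl hterm, ← Finset.sum_smul, ← map_sum]
  have hsum : ∑ j ∈ Finset.range (N + 1),
      ((-1 : ℚ) ^ j * (((N - j).factorial : ℚ))⁻¹ * ((j.factorial : ℚ))⁻¹) = 0 := by
    have key : ∀ j ∈ Finset.range (N + 1),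
        ((-1 : ℚ) ^ j * (((N - j).factorial : ℚ))⁻¹ * ((j.factorial : ℚ))⁻¹)
        = ((N.factorial : ℚ))⁻¹ * ((-1 : ℚ) ^ j * (N.choose j : ℚ)) := by
      intro j hj
      rw [Finset.mem_range] at hj
      have hjN : j ≤ N := Nat.lt_succ_iff.mp hj
      have h := Nat.choose_mul_factorial_mul_factorial hjN
      have h' : ((N.choose j : ℚ)) * (j.factorial : ℚ) * ((N - j).factorial : ℚ)
          = (N.factorial : ℚ) := by exact_mod_cast congrArg (Nat.cast : ℕ → ℚ) h
      have h1 : ((N - j).factorial : ℚ) ≠ 0 := Nat.cast_ne_zero.mpr (Nat.factorial_ne_zero _)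
      have h2 : ((j.factorial : ℚ)) ≠ 0 := Nat.cast_ne_zero.mpr (Nat.factorial_ne_zero _)
      have h3 : ((N.factorial : ℚ)) ≠ 0 := Nat.cast_ne_zero.mpr (Nat.factorial_ne_zero _)
      have base : (((N - j).factorial : ℚ))⁻¹ * ((j.factorial : ℚ))⁻¹
          = ((N.factorial : ℚ))⁻¹ * (N.choose j : ℚ) := by
        field_simp
        linear_combination -h'
      rw [mul_assoc, base]; ring
    rw [Finset.sum_congr rfl key, ← Finset.mul_sum]
    have := Int.alternating_sum_range_choose_of_ne (n := N) (by omega)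
    have hq : ∑ j ∈ Finset.range (N + 1), ((-1 : ℚ) ^ j * (N.choose j : ℚ)) = 0 := by
      exact_mod_cast congrArg (Int.cast : ℤ → ℚ) this
    rw [hq, mul_zero]
  rw [hsum, map_zero, zero_smul]
end
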